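/- The sequence λ_n defined by H_n = ln √(n(n+1)) + γ + 1/(6n(n+1) + λ_n) is strictly monotonically increasing in n ≥ 1. -/

import Mathlib

/-!
Write `d n = H n - log √(n(n+1)) - γ`, so that `λ n = 1 / d n - 6n(n+1)` and `λ n < λ (n+1)` is
equivalent to `12 (n+1) d n d (n+1) < d n - d (n+1)`. With `u = 1/(n+1)` the difference
`d n - d (n+1)` equals `artanh u - u`, which the truncated artanh series pins down from both sides.
Telescoping the upper bound against an explicit rational function `g = defectUpper`, which
decreases faster than `d` and tends to `0` as well, gives `d n ≤ g n` for `n ≥ 2`; the required inequality then becomes a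
polynomial inequality in `n - 2` with positive coefficients. For `n = 1` the bounds are evaluated
numerically.
-/

open Real Filter

noncomputable def H (n : ℕ) : ℝ := ∑ i ∈ Finset.range n, (1 : ℝ) / (i + 1)

noncomputable def lam (n : ℕ) : ℝ :=
  1 / (H n - (1 / 2) * Real.log (n * (n + 1)) - Real.eulerMascheroniConstant) - 6 * n * (n + 1)

open Finset Topology

section Artanh

noncomputable def artanhPartialSum (u : ℝ) (N : ℕ) : ℝ :=
  ∑ k ∈ range N, u ^ (2 * k + 1) / (2 * k + 1)

variable {u : ℝ}

lemma hasSum_artanh (h : |u| < 1) :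
    HasSum (fun k : ℕ ↦ u ^ (2 * k + 1) / (2 * k + 1)) ((log (1 + u) - log (1 - u)) / 2) :=
  ((hasSum_log_sub_log_of_abs_lt_one h).div_const 2).congr_fun fun k ↦ by ring

lemma artanhPartialSum_le (h0 : 0 ≤ u) (h1 : u < 1) (N : ℕ) :
    artanhPartialSum u N ≤ (log (1 + u) - log (1 - u)) / 2 :=
  sum_le_hasSum _ (fun k _ ↦ by positivity) (hasSum_artanh (abs_lt.2 ⟨by linarith, h1⟩))

lemma le_artanhPartialSum_add (h0 : 0 ≤ u) (h1 : u < 1) (N : ℕ) :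
    (log (1 + u) - log (1 - u)) / 2 ≤ artanhPartialSum u N + u ^ (2 * N + 1) / (1 - u ^ 2) := by
  have hu2 : u ^ 2 < 1 := by nlinarith
  have tail := (hasSum_nat_add_iff' N).2 (hasSum_artanh (abs_lt.2 ⟨by linarith, h1⟩))
  have geom := (hasSum_geometric_of_lt_one (sq_nonneg u) hu2).mul_left (u ^ (2 * N + 1))
  have := hasSum_le (fun k ↦ ?_) tail geom
  · rw [artanhPartialSum, div_eq_mul_inv (u ^ _)]
    linarith
  · rw [show u ^ (2 * (k + N) + 1) = u ^ (2 * N + 1) * (u ^ 2) ^ k by ring]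
    exact div_le_self (by positivity) (le_add_of_nonneg_left (by positivity))

end Artanh

noncomputable def eulerDefect (n : ℕ) : ℝ :=
  H n - (1 / 2) * log (n * (n + 1)) - eulerMascheroniConstant

lemma lam_eq (n : ℕ) : lam n = 1 / eulerDefect n - 6 * n * (n + 1) := rfl

lemma H_eq_harmonic (n : ℕ) : H n = harmonic n := by
  simp [H, harmonic, one_div]

lemma H_succ (n : ℕ) : H (n + 1) = H n + 1 / (n + 1) := by
  simp [H, sum_range_succ]

lemma tendsto_eulerDefect : Tendsto eulerDefect atTop (𝓝 0) := by
  have h := (tendsto_harmonic_sub_log.add tendsto_harmonic_sub_log_add_one).sub_const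
    (2 * eulerMascheroniConstant) |>.div_const 2
  rw [← two_mul, sub_self, zero_div] at h
  refine h.congr' ?_
  filter_upwards [eventually_gt_atTop 0] with n hn
  have hn' : (0 : ℝ) < n := Nat.cast_pos.2 hn
  rw [eulerDefect, H_eq_harmonic, log_mul hn'.ne' (by positivity)]
  ring

lemma eulerDefect_sub_eulerDefect_succ {n : ℕ} (hn : 0 < n) :
    eulerDefect n - eulerDefect (n + 1) =
      (log (1 + (n + 1 : ℝ)⁻¹) - log (1 - (n + 1 : ℝ)⁻¹)) / 2 - (n + 1 : ℝ)⁻¹ := by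
  have hn' : (0 : ℝ) < n := Nat.cast_pos.2 hn
  have h1 : 1 + (n + 1 : ℝ)⁻¹ = (n + 2) / (n + 1) := by field_simp; ring
  have h2 : 1 - (n + 1 : ℝ)⁻¹ = n / (n + 1) := by field_simp; ring
  rw [h1, h2, log_div (by positivity) (by positivity), log_div hn'.ne' (by positivity),
    eulerDefect, eulerDefect, H_succ, log_mul hn'.ne' (by positivity),
    log_mul (by positivity) (by positivity)]
  push_cast
  ring_nf

noncomputable def stepLower (x : ℝ) : ℝ := artanhPartialSum (x + 1)⁻¹ 8 - (x + 1)⁻¹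

noncomputable def stepUpper (x : ℝ) : ℝ := stepLower x + 1 / (x * (x + 2) * (x + 1) ^ 15)

lemma stepLower_pos {x : ℝ} (hx : 0 < x) : 0 < stepLower x := by
  simp only [stepLower, artanhPartialSum, sum_range_succ, sum_range_zero]
  ring_nf
  positivity

lemma stepLower_le {n : ℕ} (hn : 0 < n) : stepLower n ≤ eulerDefect n - eulerDefect (n + 1) := by
  rw [eulerDefect_sub_eulerDefect_succ hn, stepLower]
  gcongr
  exact artanhPartialSum_le (by positivity) (inv_lt_one_of_one_lt₀ (by simp [hn])) 8

lemma le_stepUpper {n : ℕ} (hn : 0 < n) : eulerDefect n - eulerDefect (n + 1) ≤ stepUpper n := by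
  have hn' : (0 : ℝ) < n := Nat.cast_pos.2 hn
  have tail : ((n + 1 : ℝ)⁻¹) ^ (2 * 8 + 1) / (1 - ((n + 1 : ℝ)⁻¹) ^ 2) =
      1 / (n * (n + 2) * (n + 1) ^ 15) := by
    rw [show 1 - ((n + 1 : ℝ)⁻¹) ^ 2 = n * (n + 2) / (n + 1) ^ 2 by field_simp; ring, inv_pow]
    field_simp
  rw [eulerDefect_sub_eulerDefect_succ hn, stepUpper, stepLower, ← tail]
  linarith [le_artanhPartialSum_add (u := (n + 1 : ℝ)⁻¹) (by positivity)
    (inv_lt_one_of_one_lt₀ (by simp [hn])) 8]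

noncomputable def defectUpperDen (x : ℝ) : ℝ := 300 * x ^ 2 * (x + 1) ^ 2 + 60 * x * (x + 1) - 11

/-- With `y = x (x+1)`, `1 / defectUpper x = 6y + 6/5 - 11/(50y)`, whereas
`1 / eulerDefect n = 6y + 6/5 - 38/(175y) + O(y⁻²)` for `y = n (n+1)`, and `11/50 > 38/175`. -/
noncomputable def defectUpper (x : ℝ) : ℝ := 50 * x * (x + 1) / defectUpperDen x

lemma defectUpperDen_pos {x : ℝ} (hx : 1 ≤ x) : 0 < defectUpperDen x := by
  unfold defectUpperDen
  nlinarith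

lemma defectUpper_pos {x : ℝ} (hx : 1 ≤ x) : 0 < defectUpper x := by
  have := defectUpperDen_pos hx
  unfold defectUpper
  positivity

lemma tendsto_defectUpper : Tendsto (fun n : ℕ ↦ defectUpper n) atTop (𝓝 0) := by
  refine squeeze_zero' ?_ ?_ tendsto_one_div_atTop_nhds_zero_nat
  all_goals filter_upwards [eventually_ge_atTop 1] with n hn
  · exact (defectUpper_pos (Nat.one_le_cast.2 hn)).le
  · have hx : (1 : ℝ) ≤ n := Nat.one_le_cast.2 hn
    rw [defectUpper, div_le_div_iff₀ (defectUpperDen_pos hx) (by positivity), defectUpperDen]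
    nlinarith

/- In the next two lemmas, substituting `x = t + 2` and clearing denominators leaves a polynomial
in `t` with positive coefficients. The denominators of `defectUpper` are generalized to atoms so
that `field_simp` can clear them using their positivity. -/

lemma stepUpper_le_defectUpper_sub {x : ℝ} (hx : 2 ≤ x) :
    stepUpper x ≤ defectUpper x - defectUpper (x + 1) := by
  obtain ⟨t, ht, rfl⟩ : ∃ t, 0 ≤ t ∧ x = t + 2 := ⟨x - 2, by linarith, by ring⟩
  have h1 := defectUpperDen_pos (x := t + 2) (by linarith)
  have h2 := defectUpperDen_pos (x := t + 2 + 1) (by linarith)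
  simp only [defectUpper, stepUpper, stepLower, artanhPartialSum, sum_range_succ, sum_range_zero]
  norm_num
  generalize hq1 : defectUpperDen (t + 2) = q1 at *
  generalize hq2 : defectUpperDen (t + 2 + 1) = q2 at *
  rw [← sub_nonneg]
  field_simp
  subst hq1 hq2
  unfold defectUpperDen
  ring_nf
  positivity

lemma mul_defectUpper_lt_stepLower {x : ℝ} (hx : 2 ≤ x) :
    12 * (x + 1) * (defectUpper x * defectUpper (x + 1)) < stepLower x := by
  obtain ⟨t, ht, rfl⟩ : ∃ t, 0 ≤ t ∧ x = t + 2 := ⟨x - 2, by linarith, by ring⟩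
  have h1 := defectUpperDen_pos (x := t + 2) (by linarith)
  have h2 := defectUpperDen_pos (x := t + 2 + 1) (by linarith)
  simp only [defectUpper, stepLower, artanhPartialSum, sum_range_succ, sum_range_zero]
  norm_num
  generalize hq1 : defectUpperDen (t + 2) = q1 at *
  generalize hq2 : defectUpperDen (t + 2 + 1) = q2 at *
  rw [← sub_pos]
  field_simp
  subst hq1 hq2
  unfold defectUpperDen
  ring_nf
  positivity

lemma mul_defectUpper_lt_stepLower_one :
    24 * ((stepUpper 1 + defectUpper 2) * defectUpper 2) < stepLower 1 := by
  norm_num [stepUpper, stepLower, defectUpper, defectUpperDen, artanhPartialSum, sum_range_succ]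

lemma eulerDefect_pos {n : ℕ} (hn : 0 < n) : 0 < eulerDefect n := by
  have anti : Antitone fun k : ℕ ↦ eulerDefect (k + 1) := antitone_nat_of_succ_le fun k ↦ by
    linarith [stepLower_le k.succ_pos, stepLower_pos (x := (k + 1 : ℕ)) (by positivity)]
  have nonneg : 0 ≤ eulerDefect (n + 1) :=
    anti.le_of_tendsto ((tendsto_add_atTop_iff_nat 1).2 tendsto_eulerDefect) n
  linarith [stepLower_le hn, stepLower_pos (x := n) (Nat.cast_pos.2 hn)]

lemma eulerDefect_le_defectUpper {n : ℕ} (hn : 2 ≤ n) : eulerDefect n ≤ defectUpper n := by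
  obtain ⟨m, rfl⟩ := Nat.exists_eq_add_of_le' hn
  let gap (k : ℕ) : ℝ := defectUpper ↑(k + 2) - eulerDefect (k + 2)
  have anti : Antitone gap := antitone_nat_of_succ_le fun k ↦ by
    have := stepUpper_le_defectUpper_sub (x := (k + 2 : ℕ)) (by simp)
    have := le_stepUpper (n := k + 2) (by omega)
    simp only [gap, show k + 1 + 2 = k + 2 + 1 by ring]
    push_cast at *
    linarith
  have lim : Tendsto gap atTop (𝓝 0) := by
    simpa [gap] using ((tendsto_add_atTop_iff_nat 2).2 tendsto_defectUpper).sub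
      ((tendsto_add_atTop_iff_nat 2).2 tendsto_eulerDefect)
  linarith [anti.le_of_tendsto lim m]

lemma lam_lt_lam_succ_of_mul_lt_sub {n : ℕ} (hn : 0 < n)
    (h : 12 * (n + 1) * (eulerDefect n * eulerDefect (n + 1)) <
      eulerDefect n - eulerDefect (n + 1)) :
    lam n < lam (n + 1) := by
  have h0 := eulerDefect_pos hn
  have h1 := eulerDefect_pos (by omega : 0 < n + 1)
  have key : 12 * (n + 1) < 1 / eulerDefect (n + 1) - 1 / eulerDefect n := by
    rw [div_sub_div _ _ h1.ne' h0.ne', lt_div_iff₀ (by positivity)]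
    linarith
  rw [lam_eq, lam_eq]
  push_cast
  linarith

lemma lam_lt_lam_succ {n : ℕ} (hn : 0 < n) : lam n < lam (n + 1) := by
  apply lam_lt_lam_succ_of_mul_lt_sub hn
  have pos₀ := eulerDefect_pos hn
  have pos₁ := eulerDefect_pos (by omega : 0 < n + 1)
  obtain rfl | hn2 : n = 1 ∨ 2 ≤ n := by omega
  · -- `defectUpper 1` is too weak here, so `d 1` is bounded through `d 2` instead.
    have hd₂ : eulerDefect 2 ≤ defectUpper 2 := by
      exact_mod_cast eulerDefect_le_defectUpper le_rfl
    have hd₁ : eulerDefect 1 ≤ stepUpper 1 + defectUpper 2 := by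
      have := le_stepUpper one_pos
      push_cast at this
      linarith
    norm_num
    calc 24 * (eulerDefect 1 * eulerDefect 2)
        ≤ 24 * ((stepUpper 1 + defectUpper 2) * defectUpper 2) := by
          have := mul_le_mul hd₁ hd₂ pos₁.le (pos₀.le.trans hd₁)
          linarith
      _ < stepLower 1 := mul_defectUpper_lt_stepLower_one
      _ ≤ _ := by exact_mod_cast stepLower_le one_pos
  · have hx : (2 : ℝ) ≤ n := by exact_mod_cast hn2
    calc 12 * (n + 1) * (eulerDefect n * eulerDefect (n + 1))
        ≤ 12 * (n + 1) * (defectUpper n * defectUpper (n + 1)) := by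
          have hd₀ := eulerDefect_le_defectUpper hn2
          have hd₁ := eulerDefect_le_defectUpper (n := n + 1) (by omega)
          push_cast at hd₁
          gcongr
          exact pos₀.le.trans hd₀
      _ < stepLower n := mul_defectUpper_lt_stepLower hx
      _ ≤ _ := stepLower_le hn

theorem stmt4 (m n : ℕ) (hm : 1 ≤ m) (hmn : m < n) : lam m < lam n := by
  have mono : StrictMono fun k ↦ lam (k + 1) :=
    strictMono_nat_of_lt_succ fun k ↦ lam_lt_lam_succ k.succ_pos
  obtain ⟨m, rfl⟩ := Nat.exists_eq_add_of_le' hm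
  obtain ⟨n, rfl⟩ := Nat.exists_eq_add_of_le' (hm.trans hmn.le)
  exact mono (by omega)
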